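/- arXiv:1804.06435 — 4 statements merged into one kernel-verified Lean document; each statement's English description precedes it below -/
import Mathlib

section
/- For α ∈ (-3, 1] and z in the unit disk, the function q̃_α(z) = 3/(3 + (α-3)z - αz²) satisfies Re q̃_α(z) > 9(1+α)/(2(3+α)²). -/
/-!
Since `3 + (α - 3) z - α z² = (1 - z)(3 + α z)`, partial fractions give
`q̃_α(z) = 3/(3+α) · (1/(1 - z) + α/(3 + α z))`. On the disk `Re 1/(1 - z) > 1/2`, and
`Re α/(3 + α z) ≥ α/(3 + α)` because the difference is `α²/(3+α) · (1 - z)/(3 + α z)`, whose real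
part is nonnegative when `|α| ≤ 3`. Hence `Re q̃_α(z) > 3/(3+α) · (1/2 + α/(3+α)) = 9(1+α)/(2(3+α)²)`.
-/

namespace Complex

lemma re_sq_add_im_sq_eq_sq_norm (z : ℂ) : z.re ^ 2 + z.im ^ 2 = ‖z‖ ^ 2 := by
  rw [Complex.sq_norm, normSq_apply]; ring

lemma one_half_lt_re_inv_one_sub {z : ℂ} (hz : ‖z‖ < 1) : 1 / 2 < (1 - z)⁻¹.re := by
  have hz2 : z.re ^ 2 + z.im ^ 2 < 1 := by
    rw [re_sq_add_im_sq_eq_sq_norm]; nlinarith [norm_nonneg z]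
  have hx : z.re < 1 := by nlinarith [sq_nonneg z.im]
  rw [inv_re, normSq_apply]
  simp only [sub_re, one_re, sub_im, one_im]
  rw [lt_div_iff₀ (by nlinarith)]
  nlinarith

/-- The numerator of this quotient is `c (1 - x) + a (x - |z|²)` with `x = Re z`, which is nonnegative since
`|x - |z|²| ≤ 1 - x` on the closed disk. -/
lemma re_one_sub_div_nonneg {a c : ℝ} (hac : |a| ≤ c) {z : ℂ} (hz : ‖z‖ ≤ 1) :
    0 ≤ ((1 - z) / (c + a * z)).re := by
  have hz2 : z.re ^ 2 + z.im ^ 2 ≤ 1 := by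
    rw [re_sq_add_im_sq_eq_sq_norm]; nlinarith [norm_nonneg z]
  have hx : z.re ≤ 1 := by nlinarith [sq_nonneg z.im]
  rw [div_re, ← add_div]
  refine div_nonneg ?_ (normSq_nonneg _)
  simp only [sub_re, one_re, sub_im, one_im, add_re, add_im, ofReal_re, ofReal_im,
    mul_re, mul_im, zero_mul, sub_zero, add_zero, zero_add]
  rcases le_or_gt 0 a with ha | ha
  · rw [abs_of_nonneg ha] at hac
    nlinarith [mul_nonneg ha (sub_nonneg.mpr hz2), mul_nonneg (sub_nonneg.mpr hac) (sub_nonneg.mpr hx)]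
  · rw [abs_of_neg ha] at hac
    nlinarith [mul_nonneg (neg_nonneg.mpr ha.le) (add_nonneg (sq_nonneg (1 - z.re)) (sq_nonneg z.im)),
      mul_nonneg (sub_nonneg.mpr hac) (sub_nonneg.mpr hx)]

lemma ofReal_add_ofReal_mul_ne_zero {a c : ℝ} (hac : |a| < c) {z : ℂ} (hz : ‖z‖ ≤ 1) :
    (c : ℂ) + a * z ≠ 0 := by
  intro h
  have : ‖(a : ℂ) * z‖ = c := by
    rw [eq_neg_of_add_eq_zero_right h, norm_neg, norm_real, Real.norm_eq_abs,
      abs_of_pos ((abs_nonneg a).trans_lt hac)]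
  rw [norm_mul, norm_real, Real.norm_eq_abs] at this
  nlinarith [abs_nonneg a, norm_nonneg z]

lemma div_eq_ofReal_mul_inv_one_sub_add_div {a c : ℝ} (hca : c + a ≠ 0) {z : ℂ} (hz : z ≠ 1)
    (hcaz : (c : ℂ) + a * z ≠ 0) :
    c / (c + (a - c) * z - a * z ^ 2) = ((c / (c + a) : ℝ) : ℂ) * ((1 - z)⁻¹ + a / (c + a * z)) := by
  have hca' : (c : ℂ) + a ≠ 0 := by exact_mod_cast hca
  have hz' : 1 - z ≠ 0 := sub_ne_zero.mpr hz.symm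
  rw [show (c : ℂ) + (a - c) * z - a * z ^ 2 = (1 - z) * (c + a * z) by ring]
  push_cast
  rw [inv_eq_one_div, div_add_div _ _ hz' hcaz, div_mul_div_comm,
    div_eq_div_iff (mul_ne_zero hz' hcaz) (mul_ne_zero hca' (mul_ne_zero hz' hcaz))]
  ring

lemma div_le_re_div_ofReal_add_mul {a c : ℝ} (hac : |a| < c) {z : ℂ} (hz : ‖z‖ ≤ 1) :
    a / (c + a) ≤ ((a : ℂ) / (c + a * z)).re := by
  have hca : 0 < c + a := by linarith [neg_abs_le a]
  have hcaz := ofReal_add_ofReal_mul_ne_zero hac hz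
  have hdiff : (a : ℂ) / (c + a * z) - ((a / (c + a) : ℝ) : ℂ)
      = ((a ^ 2 / (c + a) : ℝ) : ℂ) * ((1 - z) / (c + a * z)) := by
    have hca' : (c : ℂ) + a ≠ 0 := by exact_mod_cast hca.ne'
    push_cast
    rw [div_sub_div _ _ hcaz hca', div_mul_div_comm, div_eq_div_iff (mul_ne_zero hcaz hca')
      (mul_ne_zero hca' hcaz)]
    ring
  have hre := congrArg re hdiff
  rw [sub_re, ofReal_re, re_ofReal_mul] at hre
  have := mul_nonneg (div_nonneg (sq_nonneg a) hca.le) (re_one_sub_div_nonneg hac.le hz)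
  linarith

end Complex

/-- For α ∈ (-3,1] and z in the unit disk, Re q̃_α(z) > 9(1+α)/(2(3+α)²). -/
theorem stmt0 (α : ℝ) (hα1 : -3 < α) (hα2 : α ≤ 1) (z : ℂ) (hz : ‖z‖ < 1) :
    (3 / (3 + ((α : ℂ) - 3) * z - (α : ℂ) * z ^ 2)).re > 9 * (1 + α) / (2 * (3 + α) ^ 2) := by
  have hα : |α| < 3 := abs_lt.mpr ⟨hα1, by linarith⟩
  have h3α : 0 < 3 + α := by linarith
  have hz1 : z ≠ 1 := by rintro rfl; simp at hz
  have hdec := Complex.div_eq_ofReal_mul_inv_one_sub_add_div h3α.ne' hz1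
    (Complex.ofReal_add_ofReal_mul_ne_zero hα hz.le)
  have h1 := Complex.one_half_lt_re_inv_one_sub hz
  have h2 := Complex.div_le_re_div_ofReal_add_mul hα hz.le
  simp only [Complex.ofReal_ofNat] at hdec h2
  rw [hdec, Complex.re_ofReal_mul, Complex.add_re]
  calc 9 * (1 + α) / (2 * (3 + α) ^ 2) = 3 / (3 + α) * (1 / 2 + α / (3 + α)) := by
        field_simp; ring
    _ < _ := mul_lt_mul_of_pos_left (add_lt_add_of_lt_of_le h1 h2) (by positivity)
end

section
/- Let 0 < γ ≤ 1/2. For all real ρ and all real σ with σ ≤ -(1+ρ²)/2, defining ψ(a,b) = 1 + (1-γ)b/((1-γ)a + γ), we have Re ψ(iρ, σ) ≤ (2-3γ)/(2(1-γ)). -/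
/-- For 0 < γ ≤ 1/2 and real ρ, σ with σ ≤ -(1+ρ²)/2,
    Re ψ(iρ,σ) ≤ (2-3γ)/(2(1-γ)) where ψ(a,b) = 1 + (1-γ)b/((1-γ)a+γ). -/
theorem stmt3 (γ : ℝ) (h1 : 0 < γ) (h2 : γ ≤ 1 / 2) (ρ σ : ℝ)
    (hσ : σ ≤ -(1 + ρ ^ 2) / 2) :
    (1 + (1 - (γ : ℂ)) * (σ : ℂ) / ((1 - (γ : ℂ)) * ((ρ : ℂ) * Complex.I) + (γ : ℂ))).re ≤
      (2 - 3 * γ) / (2 * (1 - γ)) := by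
  have hγ1 : 0 < 1 - γ := by linarith
  simp only [Complex.add_re, Complex.one_re, Complex.div_re, Complex.mul_re, Complex.mul_im,
    Complex.sub_re, Complex.sub_im, Complex.ofReal_re, Complex.ofReal_im, Complex.one_im,
    Complex.I_re, Complex.I_im, Complex.normSq_apply, Complex.add_im]
  ring_nf
  have hD : (0:ℝ) < -(γ*ρ^2*2) + γ^2 + γ^2*ρ^2 + ρ^2 := by nlinarith [sq_nonneg ((1-γ)*ρ)]
  set t := (-(γ*ρ^2*2) + γ^2 + γ^2*ρ^2 + ρ^2)⁻¹ with ht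
  have htpos : 0 < t := inv_pos.mpr hD
  have hs : (0:ℝ) < 2 - γ*2 := by linarith
  set u := (2 - γ*2)⁻¹ with hu
  have hupos : 0 < u := inv_pos.mpr hs
  have huD : u * (2 - γ*2) = 1 := inv_mul_cancel₀ hs.ne'
  have e1 : 2 * u = 2 / (2 - γ*2) := by rw [hu]; ring
  have e2 : (1-γ)*(1+ρ^2)*t = ((1-γ)*(1+ρ^2)) / (-(γ*ρ^2*2) + γ^2 + γ^2*ρ^2 + ρ^2) := by
    rw [ht]; ring
  have key : 2 * u ≤ (1-γ)*(1+ρ^2)*t := by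
    rw [e1, e2, div_le_div_iff₀ hs hD]
    nlinarith [sq_nonneg ρ, mul_nonneg (sq_nonneg (1-2*γ)) (sq_nonneg ρ)]
  have hc : (0:ℝ) ≤ γ*(1-γ)*t := by positivity
  have h3 := mul_le_mul_of_nonneg_left hσ hc
  have h4 := mul_le_mul_of_nonneg_left key (by positivity : (0:ℝ) ≤ γ/2)
  nlinarith [h3, h4, huD]
end

section
/- For -3 < α ≤ 1, 0 < r < 1 and any φ ∈ [0, 2π) with 9 - 3(3-α)r - 3|α|r² > 0, the value q̃_α(re^{iφ}) = 3/(3 + (α-3)re^{iφ} - α r²e^{2iφ}) satisfies |Im q̃_α(re^{iφ})| / |Re q̃_α(re^{iφ})| < (3(3-α)r + |α|r²)/(9 - 3(3-α)r - 3|α|r²). -/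
set_option maxHeartbeats 1000000


theorem coreIneq (A b r t u : ℝ) (hA : 2 ≤ A) (hb0 : 0 ≤ b) (hb1 : 4*b < 3*A)
    (hb2 : 12*b ≤ 3*A^2) (hr0 : 0<r) (hr1 : r<1) (hD : 0 < 3-A*r-b*r^2)
    (ht : 0 ≤ t) (hu : 0 ≤ u) (htu : t^2+u^2 = 1) :
    3*(r*t*(A+2*b*r*u))*(3-A*r-b*r^2) <
      (3*A*r+b*r^2)*((3-A*r-b*r^2) + A*r*(1-u)) := by
  have hA0 : (0:ℝ) < A := by linarith
  obtain ⟨d, hd⟩ : ∃ d, d = 3-A*r-b*r^2 := ⟨_, rfl⟩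
  rw [← hd] at hD ⊢
  have hd3 : d < 3 := by nlinarith [mul_nonneg hb0 (sq_nonneg r)]
  have hu1 : u ≤ 1 := by nlinarith [sq_nonneg t]
  have ht1 : t ≤ 1 := by nlinarith [sq_nonneg u]
  have h6 : 6*(t*u) ≤ 3 := by nlinarith [sq_nonneg (t-u)]
  have h15 : t + u ≤ 3/2 := by nlinarith [sq_nonneg (t-u), sq_nonneg (t+u)]
  rcases hb0.eq_or_lt with hb|hb
  · subst hb
    have h1 : t*d ≤ d := by nlinarith
    rcases hu1.eq_or_lt with hu2|hu2
    · have ht0 : t = 0 := by nlinarith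
      rw [ht0, ← hu2]
      have : 0 < 3*A*r*d := by apply mul_pos _ hD; positivity
      nlinarith
    · nlinarith [mul_pos (mul_pos hA0 hr0) (by linarith : (0:ℝ) < 1 - u)]
  · have h_b : 0 ≤ A*b*(r^3*(1-u)) :=
      mul_nonneg (mul_nonneg hA0.le hb.le) (mul_nonneg (by positivity) (by linarith))
    have h_c : 0 ≤ b*(r^2*d)*(3 - 6*(t*u)) :=
      mul_nonneg (mul_nonneg hb.le (mul_nonneg (sq_nonneg r) hD.le)) (by linarith)
    rcases le_total d (A*r) with h|h
    · have h_a : 0 ≤ A*(A*r - d)*(r*(1-u)) :=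
        mul_nonneg (mul_nonneg hA0.le (by linarith)) (mul_nonneg hr0.le (by linarith))
      have h_d : 0 ≤ A*(r*d)*(3/2 - (t+u)) :=
        mul_nonneg (mul_nonneg hA0.le (mul_nonneg hr0.le hD.le)) (by linarith)
      have h_e : 0 < r*d*(3*A - 4*b*r) := by
        apply mul_pos (mul_pos hr0 hD); nlinarith
      linarith [h_a, h_b, h_c, h_d, h_e]
    · have h_a : 0 ≤ A*(d - A*r)*(r*(1-t)) :=
        mul_nonneg (mul_nonneg hA0.le (by linarith)) (mul_nonneg hr0.le (by linarith))
      have h_d : 0 ≤ A^2*r^2*(3/2 - (t+u)) :=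
        mul_nonneg (by positivity) (by linarith)
      have h_e : 0 < r^2*(3*A^2/2 - 2*b*d) := by
        have h1 : 0 < 3*A^2/2 - 2*b*d := by
          linarith [mul_pos hb (show (0:ℝ) < 3 - d by linarith)]
        exact mul_pos (by positivity) h1
      linarith [h_a, h_b, h_c, h_d, h_e]

/-- For -3 < α ≤ 1, 0 < r < 1 with 9 - 3(3-α)r - 3|α|r² > 0 and φ ∈ [0,2π),
    |Im q̃_α(re^{iφ})|/|Re q̃_α(re^{iφ})| < (3(3-α)r + |α|r²)/(9 - 3(3-α)r - 3|α|r²). -/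
theorem stmt7 (α : ℝ) (hα1 : -3 < α) (hα2 : α ≤ 1) (r : ℝ) (hr0 : 0 < r) (hr1 : r < 1)
    (hden : 0 < 9 - 3 * (3 - α) * r - 3 * |α| * r ^ 2)
    (φ : ℝ) (hφ0 : 0 ≤ φ) (hφ : φ < 2 * Real.pi) :
    |(3 / (3 + ((α : ℂ) - 3) * ((r : ℂ) * Complex.exp (φ * Complex.I)) -
        (α : ℂ) * ((r : ℂ) ^ 2 * Complex.exp (2 * φ * Complex.I)))).im| /
      |(3 / (3 + ((α : ℂ) - 3) * ((r : ℂ) * Complex.exp (φ * Complex.I)) -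
        (α : ℂ) * ((r : ℂ) ^ 2 * Complex.exp (2 * φ * Complex.I)))).re| <
      (3 * (3 - α) * r + |α| * r ^ 2) / (9 - 3 * (3 - α) * r - 3 * |α| * r ^ 2) := by
  set c := Real.cos φ with hc
  set s := Real.sin φ with hs
  set X := 3 + (α-3)*(r*c) - α*(r^2*(2*c^2-1)) with hX
  set Y := (α-3)*(r*s) - α*(r^2*(2*s*c)) with hY
  have hz : (3 + ((α : ℂ) - 3) * ((r : ℂ) * Complex.exp (φ * Complex.I)) -
      (α : ℂ) * ((r : ℂ) ^ 2 * Complex.exp (2 * φ * Complex.I))) = (X:ℂ) + (Y:ℂ) * Complex.I := by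
    have h2 : (2:ℂ) * (φ:ℝ) * Complex.I = ((2*φ:ℝ):ℂ) * Complex.I := by push_cast; ring
    rw [h2, Complex.exp_mul_I, Complex.exp_mul_I, ← Complex.ofReal_cos, ← Complex.ofReal_sin,
      ← Complex.ofReal_cos, ← Complex.ofReal_sin, hX, hY, Real.cos_two_mul, Real.sin_two_mul, ← hc, ← hs]
    push_cast
    ring
  rw [hz]
  set z : ℂ := (X:ℂ) + (Y:ℂ) * Complex.I with hzdef
  have hzre : z.re = X := by simp [hzdef]
  have hzim : z.im = Y := by simp [hzdef]
  -- bounds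
  have hc1 : |c| ≤ 1 := Real.abs_cos_le_one φ
  have hs1 : |s| ≤ 1 := Real.abs_sin_le_one φ
  have hα0 : (0:ℝ) ≤ |α| := abs_nonneg α
  have hαle : α ≤ |α| := le_abs_self α
  have hαge : -|α| ≤ α := neg_abs_le α
  have hD3 : 0 < 3 - (3-α)*r - |α| * r^2 := by linarith
  have habs2 : α*(2*c^2-1) ≤ |α| := by
    calc α*(2*c^2-1) ≤ |α*(2*c^2-1)| := le_abs_self _
    _ = |α| * |2*c^2-1| := abs_mul _ _
    _ ≤ |α| * 1 := by
        apply mul_le_mul_of_nonneg_left _ hα0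
        rw [abs_le]; constructor <;> nlinarith [abs_le.1 hc1]
    _ = |α| := mul_one _
  have h2gen : α*(r^2*(2*c^2-1)) ≤ |α| * r^2 := by
    have := mul_le_mul_of_nonneg_left habs2 (sq_nonneg r)
    nlinarith [this]
  have h1gen : (α-3)*(r*c) ≥ -((3-α)*r) := by
    nlinarith [mul_nonneg (mul_nonneg (by linarith : (0:ℝ) ≤ 3-α) hr0.le) (by linarith [abs_le.1 hc1] : (0:ℝ) ≤ 1 - c)]
  have hXpos : 0 < X := by
    simp only [hX]; linarith
  have hNpos : 0 < 3*(3-α)*r + |α| * r^2 := by nlinarith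
  have hDpos : 0 < 9 - 3*(3-α)*r - 3* |α| * r^2 := hden
  -- core inequality instance
  have key : |Y| * (9 - 3*(3-α)*r - 3* |α| * r^2) < (3*(3-α)*r + |α| * r^2) * X := by
    have hyp1 : 4 * |α| < 3*(3-α) := by
      rcases abs_cases α with ⟨h,_⟩|⟨h,_⟩ <;> linarith
    have hyp2 : 12 * |α| ≤ 3*(3-α)^2 := by
      rcases abs_cases α with ⟨h,h'⟩|⟨h,h'⟩
      · nlinarith [mul_nonneg (by linarith : (0:ℝ) ≤ 1-α) (by linarith : (0:ℝ) ≤ 9-α)]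
      · nlinarith [sq_nonneg (α-1)]
    have H := coreIneq (3-α) |α| r |s| |c| (by linarith) hα0 hyp1 hyp2
      hr0 hr1 hD3 (abs_nonneg s) (abs_nonneg c)
      (by rw [sq_abs, sq_abs]; exact Real.sin_sq_add_cos_sq φ)
    have hYle : |Y| ≤ r * |s| * ((3-α) + 2* |α| * r* |c|) := by
      have : Y = r * (s * ((α-3) - 2*α*(r*c))) := by rw [hY]; ring
      rw [this, abs_mul, abs_mul, abs_of_pos hr0]
      have h3 : |(α-3) - 2*α*(r*c)| ≤ (3-α) + 2* |α| * r* |c| := by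
        calc |(α-3) - 2*α*(r*c)| ≤ |α-3| + |2*α*(r*c)| := abs_sub _ _
        _ = (3-α) + 2* |α| * (r* |c|) := by
            rw [abs_of_nonpos (by linarith), abs_mul, abs_mul, abs_mul, abs_of_pos hr0]
            norm_num
        _ = (3-α) + 2* |α| * r* |c| := by ring
      have := mul_le_mul_of_nonneg_left h3 (abs_nonneg s)
      nlinarith [abs_nonneg s]
    have hXge : (3 - (3-α)*r - |α| * r^2) + (3-α)*r*(1-|c|) ≤ X := by
      have h1 : (3-α)*(r*c) ≤ (3-α)*(r* |c|) := by
        apply mul_le_mul_of_nonneg_left _ (by linarith)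
        exact mul_le_mul_of_nonneg_left (le_abs_self c) hr0.le
      simp only [hX]; nlinarith [h2gen]
    calc |Y| * (9 - 3*(3-α)*r - 3* |α| * r^2)
        ≤ (r * |s| * ((3-α) + 2* |α| * r* |c|)) * (9 - 3*(3-α)*r - 3* |α| * r^2) :=
          mul_le_mul_of_nonneg_right hYle hDpos.le
      _ = 3*(r* |s| * ((3-α)+2* |α| * r* |c|))*(3-(3-α)*r-|α| * r^2) := by ring
      _ < (3*(3-α)*r+|α| * r^2)*((3-(3-α)*r-|α| * r^2) + (3-α)*r*(1-|c|)) := H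
      _ ≤ (3*(3-α)*r + |α| * r^2) * X := mul_le_mul_of_nonneg_left hXge hNpos.le
  -- compute re/im of 3/z
  have hnsq : 0 < Complex.normSq z := by
    apply Complex.normSq_pos.2
    intro h
    rw [h] at hzre
    simp at hzre
    linarith
  have him3 : ((3:ℂ)/z).im = -(3 * Y) / Complex.normSq z := by
    rw [Complex.div_im]
    simp [hzre, hzim]
    ring
  have hre3 : ((3:ℂ)/z).re = 3 * X / Complex.normSq z := by
    rw [Complex.div_re]
    simp [hzre, hzim]
  have e1 : |((3:ℂ)/z).im| = 3 * |Y| / Complex.normSq z := by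
    rw [him3, abs_div, abs_of_pos hnsq, abs_neg, abs_mul]
    norm_num
  have e2 : |((3:ℂ)/z).re| = 3 * X / Complex.normSq z := by
    rw [hre3, abs_div, abs_of_pos hnsq, abs_mul, abs_of_pos hXpos]
    norm_num
  rw [e1, e2]
  rw [div_lt_div_iff₀ (by positivity) hDpos]
  have hnsq' : (0:ℝ) < 3 / Complex.normSq z := by positivity
  calc 3 * |Y| / Complex.normSq z * (9 - 3*(3-α)*r - 3* |α| * r^2)
      = (3 / Complex.normSq z) * (|Y| * (9 - 3*(3-α)*r - 3* |α| * r^2)) := by ring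
    _ < (3 / Complex.normSq z) * ((3*(3-α)*r + |α| * r^2) * X) := by
        exact mul_lt_mul_of_pos_left key hnsq'
    _ = (3 * (3-α) * r + |α| * r ^ 2) * (3 * X / Complex.normSq z) := by ring
end

section
/- Let α ∈ (-3,1] and f ∈ SK(α) with inverse f⁻¹(w) = w + Σ_{n≥2} b_n w^n near 0. Then |b₃| ≤ ((3-α)/6)·max{1, |(5α² - 33α + 45)/(6(3-α))|}. -/
/-!
Write the Schwarz function as `w z = z g z`; the Schwarz–Pick lemma for `g` at the origin gives
`‖w''(0) / 2‖ ≤ 1 - ‖w'(0)‖ ^ 2`. Comparing Taylor coefficients in `z f' = f · (q̃_α ∘ w)` and in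
`f⁻¹ ∘ f = id` yields `b₃ = T w'(0) ^ 2 - ((3 - α) / 6) (w''(0) / 2)` with
`T = (2α² - 15α + 18) / 18`, and `‖A c₁ ^ 2 - B c₂‖ ≤ max ‖A‖ ‖B‖` whenever
`‖c₂‖ ≤ 1 - ‖c₁‖ ^ 2`. For `α ≤ 1` one has `0 ≤ T ≤ ((3 - α) / 6) (5α² - 33α + 45) / (6 (3 - α))`.
-/

noncomputable def qt (α : ℝ) (z : ℂ) : ℂ := 3 / (3 + ((α : ℂ) - 3) * z - (α : ℂ) * z ^ 2)

open Filter Metric Set FormalMultilinearSeries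
open scoped Topology Nat ComplexConjugate

section PowerSeries

variable {𝕜 : Type*} [RCLike 𝕜]

theorem hasFPowerSeriesOnBall_ofScalars_of_hasSum {f : 𝕜 → 𝕜} {c : ℕ → 𝕜} {r : ℝ} (hr : 0 < r)
    (hf : ∀ z : 𝕜, ‖z‖ < r → HasSum (fun n => c n * z ^ n) (f z)) :
    HasFPowerSeriesOnBall f (ofScalars 𝕜 c) 0 (ENNReal.ofReal r) where
  r_le := by
    refine ENNReal.le_of_forall_nnreal_lt fun ρ hρ => ?_
    have hρr : (ρ : ℝ) < r := by
      rwa [← ENNReal.ofReal_coe_nnreal, ENNReal.ofReal_lt_ofReal_iff hr] at hρ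
    refine (ofScalars 𝕜 c).le_radius_of_tendsto (l := 0) ?_
    have h := (hf ((ρ : ℝ) : 𝕜) (by simpa using hρr)).summable.tendsto_atTop_zero.norm
    simpa [ofScalars_norm, norm_mul] using h
  r_pos := by simpa using hr
  hasSum {y} hy := by
    have hy' : ‖y‖ < r := by
      rwa [Metric.mem_eball, edist_zero_right, ← ofReal_norm,
        ENNReal.ofReal_lt_ofReal_iff hr] at hy
    simpa [ofScalars_apply_eq, mul_comm] using hf y hy'

theorem HasFPowerSeriesOnBall.iteratedDeriv_eq_factorial_mul {f : 𝕜 → 𝕜} {c : ℕ → 𝕜} {x : 𝕜}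
    {r : ENNReal} (hf : HasFPowerSeriesOnBall f (ofScalars 𝕜 c) x r) (n : ℕ) :
    iteratedDeriv n f x = n ! * c n := by
  rw [iteratedDeriv_eq_iteratedFDeriv, ← hf.factorial_smul, ofScalars_apply_eq]
  simp [nsmul_eq_mul]

end PowerSeries

section Calculus

variable {𝕜 : Type*} [NontriviallyNormedField 𝕜]

theorem iteratedDeriv_two_fun_mul {f g : 𝕜 → 𝕜} {x : 𝕜} (hf : ContDiffAt 𝕜 2 f x)
    (hg : ContDiffAt 𝕜 2 g x) :
    iteratedDeriv 2 (fun z => f z * g z) x =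
      iteratedDeriv 2 f x * g x + 2 * deriv f x * deriv g x + f x * iteratedDeriv 2 g x := by
  rw [iteratedDeriv_fun_mul hf hg]
  simp only [Nat.reduceAdd, Finset.sum_range_succ, Finset.range_one, Finset.sum_singleton,
    Nat.choose_zero_right, Nat.cast_one, iteratedDeriv_zero, one_mul, tsub_zero,
    Nat.choose_succ_self_right, Nat.cast_ofNat, iteratedDeriv_one, Nat.add_one_sub_one,
    Nat.choose_self, tsub_self]
  ring

theorem iteratedDeriv_three_fun_mul {f g : 𝕜 → 𝕜} {x : 𝕜} (hf : ContDiffAt 𝕜 3 f x)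
    (hg : ContDiffAt 𝕜 3 g x) :
    iteratedDeriv 3 (fun z => f z * g z) x =
      iteratedDeriv 3 f x * g x + 3 * iteratedDeriv 2 f x * deriv g x
        + 3 * deriv f x * iteratedDeriv 2 g x + f x * iteratedDeriv 3 g x := by
  rw [iteratedDeriv_fun_mul hf hg]
  simp only [Nat.reduceAdd, Finset.sum_range_succ, Finset.range_one, Finset.sum_singleton,
    Nat.choose, Nat.cast_one, iteratedDeriv_zero, one_mul, tsub_zero, add_zero, Nat.cast_ofNat,
    iteratedDeriv_one, Nat.add_one_sub_one, Nat.reduceSub, tsub_self]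
  ring

theorem iteratedDeriv_succ_id_mul_zero {g : 𝕜 → 𝕜} {n : ℕ} (hg : ContDiffAt 𝕜 (n + 1) g 0) :
    iteratedDeriv (n + 1) (fun z => z * g z) 0 = (n + 1) * iteratedDeriv n g 0 := by
  rw [iteratedDeriv_fun_mul contDiffAt_id (by exact_mod_cast hg),
    Finset.sum_eq_single 1 (fun i _ hi => by simp [iteratedDeriv_fun_id_zero, hi])
      (fun h => by simp at h)]
  simp [iteratedDeriv_fun_id_zero]

theorem iteratedDeriv_three_of_leftInverse {f g : 𝕜 → 𝕜} {x : 𝕜} (hg : ContDiffAt 𝕜 3 g (f x))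
    (hf : ContDiffAt 𝕜 3 f x) (hgf : ∀ᶠ z in 𝓝 x, g (f z) = z) (hf1 : deriv f x = 1) :
    iteratedDeriv 3 g (f x) = 3 * iteratedDeriv 2 f x ^ 2 - iteratedDeriv 3 f x := by
  have hid : (g ∘ f) =ᶠ[𝓝 x] id := hgf
  have h1 : deriv g (f x) = 1 := by
    have := hid.deriv_eq
    rwa [deriv_comp x (hg.differentiableAt (by norm_num)) (hf.differentiableAt (by norm_num)),
      hf1, mul_one, deriv_id] at this
  have h2 : iteratedDeriv 2 g (f x) = -iteratedDeriv 2 f x := by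
    have := hid.iteratedDeriv_eq 2
    rw [iteratedDeriv_comp_two (hg.of_le (by norm_num)) (hf.of_le (by norm_num)), hf1, h1,
      iteratedDeriv_id] at this
    simp only [OfNat.ofNat_ne_zero, OfNat.ofNat_ne_one, if_false] at this
    linear_combination this
  have h3 := hid.iteratedDeriv_eq 3
  rw [iteratedDeriv_comp_three hg hf, hf1, h1, h2, iteratedDeriv_id] at h3
  simp only [OfNat.ofNat_ne_zero, OfNat.ofNat_ne_one, if_false] at h3
  linear_combination h3

section Subordination

variable [CompleteSpace 𝕜] {f Q : 𝕜 → 𝕜} (hf : AnalyticAt 𝕜 f 0) (hQ : AnalyticAt 𝕜 Q 0)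
  (hf0 : f 0 = 0) (hf1 : deriv f 0 = 1) (hQ0 : Q 0 = 1)
  (hfQ : (fun z => f z * Q z) =ᶠ[𝓝 0] fun z => z * deriv f z)
include hf hfQ

theorem iteratedDeriv_succ_mul_of_mul_eq_id_mul_deriv (n : ℕ) :
    iteratedDeriv (n + 1) (fun z => f z * Q z) 0 = (n + 1) * iteratedDeriv (n + 1) f 0 := by
  rw [hfQ.iteratedDeriv_eq, iteratedDeriv_succ_id_mul_zero hf.deriv.contDiffAt,
    iteratedDeriv_succ']

include hQ hf0 hf1 hQ0

theorem iteratedDeriv_two_of_mul_eq_id_mul_deriv : iteratedDeriv 2 f 0 = 2 * deriv Q 0 := by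
  have h := iteratedDeriv_succ_mul_of_mul_eq_id_mul_deriv hf hfQ 1
  rw [iteratedDeriv_two_fun_mul hf.contDiffAt hQ.contDiffAt, hf0, hf1, hQ0] at h
  linear_combination -h

theorem iteratedDeriv_three_of_mul_eq_id_mul_deriv :
    2 * iteratedDeriv 3 f 0 = 3 * iteratedDeriv 2 f 0 * deriv Q 0 + 3 * iteratedDeriv 2 Q 0 := by
  have h := iteratedDeriv_succ_mul_of_mul_eq_id_mul_deriv hf hfQ 2
  rw [iteratedDeriv_three_fun_mul hf.contDiffAt hQ.contDiffAt, hf0, hf1, hQ0] at h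
  linear_combination -h

end Subordination

end Calculus

namespace qt

variable (α : ℝ)

theorem apply_zero : qt α 0 = 1 := by norm_num [qt]

theorem analyticAt_zero : AnalyticAt ℂ (qt α) 0 := by
  unfold qt
  apply AnalyticAt.div (by fun_prop) (by fun_prop)
  norm_num

theorem deriv_zero_and_iteratedDeriv_two_zero :
    deriv (qt α) 0 = (3 - α) / 3 ∧ iteratedDeriv 2 (qt α) 0 = (2 * (α - 3) ^ 2 + 6 * α) / 9 := by
  set D : ℂ → ℂ := fun z => 3 + ((α : ℂ) - 3) * z - (α : ℂ) * z ^ 2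
  have hD' : deriv D = fun z => ((α : ℂ) - 3) - 2 * α * z := by
    funext z
    have := (((hasDerivAt_id' z).const_mul ((α : ℂ) - 3)).const_add 3).fun_sub
      ((hasDerivAt_pow 2 z).const_mul (α : ℂ))
    rw [this.deriv]
    ring
  have hD'' : iteratedDeriv 2 D 0 = -2 * α := by
    rw [iteratedDeriv_succ, iteratedDeriv_one, hD',
      ((hasDerivAt_id' (0 : ℂ)).const_mul (2 * (α : ℂ))).const_sub _ |>.deriv]
    ring
  have hD1 : deriv D 0 = α - 3 := by simp [hD']
  have hD0 : D 0 = 3 := by norm_num [D]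
  have hD : AnalyticAt ℂ D 0 := by fun_prop
  -- differentiate `D · qt α = 3` once and twice at the origin
  have hDq : (fun z => D z * qt α z) =ᶠ[𝓝 0] fun _ => 3 := by
    have : ∀ᶠ z in 𝓝 (0 : ℂ), D z ≠ 0 :=
      (show Continuous D by fun_prop).continuousAt.eventually_ne (by norm_num [hD0])
    filter_upwards [this] with z hz
    exact mul_div_cancel₀ _ hz
  have h1 := hDq.deriv_eq
  have h2 := hDq.iteratedDeriv_eq 2
  rw [deriv_fun_mul hD.differentiableAt (analyticAt_zero α).differentiableAt, deriv_const,
    apply_zero, hD0, hD1] at h1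
  rw [iteratedDeriv_two_fun_mul hD.contDiffAt (analyticAt_zero α).contDiffAt, hD'', apply_zero,
    hD0, hD1, iteratedDeriv_const, if_neg two_ne_zero] at h2
  have e1 : deriv (qt α) 0 = (3 - α) / 3 := by linear_combination h1 / 3
  refine ⟨e1, ?_⟩
  linear_combination h2 / 3 - 2 * (α - 3) / 3 * e1

end qt

namespace Complex

theorem norm_sub_le_norm_one_sub_conj_mul {a c : ℂ} (ha : ‖a‖ < 1) (hc : ‖c‖ ≤ 1) :
    ‖c - a‖ ≤ ‖1 - conj a * c‖ := by
  have key : normSq (1 - conj a * c) - normSq (c - a) = (1 - normSq a) * (1 - normSq c) := by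
    simp only [normSq_apply, sub_re, sub_im, one_re, one_im, mul_re, mul_im, conj_re, conj_im]
    ring
  rw [normSq_eq_norm_sq, normSq_eq_norm_sq, normSq_eq_norm_sq, normSq_eq_norm_sq] at key
  refine pow_le_pow_iff_left₀ (norm_nonneg _) (norm_nonneg _) two_ne_zero |>.mp ?_
  have ha' : 0 ≤ 1 - ‖a‖ ^ 2 := by nlinarith [norm_nonneg a]
  have hc' : 0 ≤ 1 - ‖c‖ ^ 2 := by nlinarith [norm_nonneg c]
  nlinarith [mul_nonneg ha' hc']

theorem one_sub_conj_mul_ne_zero {a c : ℂ} (ha : ‖a‖ < 1) (hc : ‖c‖ ≤ 1) :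
    1 - conj a * c ≠ 0 := by
  rw [sub_ne_zero]
  refine fun h => (norm_mul_le (conj a) c).not_gt ?_
  rw [← h, norm_one, norm_conj]
  nlinarith [norm_nonneg a, norm_nonneg c]

theorem norm_deriv_le_one_sub_sq_of_mapsTo {g : ℂ → ℂ} (hd : DifferentiableOn ℂ g (ball 0 1))
    (hg : MapsTo g (ball 0 1) (closedBall 0 1)) : ‖deriv g 0‖ ≤ 1 - ‖g 0‖ ^ 2 := by
  have h0 : ball (0 : ℂ) 1 ∈ 𝓝 0 := ball_mem_nhds 0 one_pos
  have hle : ∀ z ∈ ball (0 : ℂ) 1, ‖g z‖ ≤ 1 := fun z hz => mem_closedBall_zero_iff.mp (hg hz)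
  set a := g 0
  rcases (hle 0 (mem_ball_self one_pos)).lt_or_eq with ha | ha
  · -- Schwarz's lemma for the disc automorphism moving `a` to `0`, composed with `g`
    set ψ : ℂ → ℂ := fun z => (g z - a) / (1 - conj a * g z)
    have hden : ∀ z ∈ ball (0 : ℂ) 1, 1 - conj a * g z ≠ 0 := fun z hz =>
      one_sub_conj_mul_ne_zero ha (hle z hz)
    have hψd : DifferentiableOn ℂ ψ (ball 0 1) :=
      (hd.sub_const a).div ((differentiableOn_const _).sub
        ((differentiableOn_const _).mul hd)) hden
    have hψ : MapsTo ψ (ball 0 1) (closedBall (ψ 0) 1) := fun z hz => by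
      rw [show ψ 0 = 0 by simp [ψ, a], mem_closedBall_zero_iff, norm_div,
        div_le_one (norm_pos_iff.mpr (hden z hz))]
      exact norm_sub_le_norm_one_sub_conj_mul ha (hle z hz)
    have hga : HasDerivAt g (deriv g 0) 0 := (hd.differentiableAt h0).hasDerivAt
    have hψ' : deriv ψ 0 = deriv g 0 / (1 - conj a * a) := by
      refine ((hga.sub_const a).fun_div ((hga.const_mul (conj a)).const_sub 1)
        (hden 0 (mem_ball_self one_pos))).deriv.trans ?_
      rw [show g 0 - a = 0 from sub_self a, zero_mul, sub_zero, sq,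
        mul_div_mul_right _ _ (hden 0 (mem_ball_self one_pos))]
    have hnorm : ‖1 - conj a * a‖ = 1 - ‖a‖ ^ 2 := by
      rw [conj_mul', ← ofReal_pow, ← ofReal_one, ← ofReal_sub, norm_real, Real.norm_eq_abs,
        abs_of_pos (by nlinarith [norm_nonneg a])]
    have := norm_deriv_le_one_of_mapsTo_ball hψd hψ one_pos
    rwa [hψ', norm_div, hnorm, div_le_one (by nlinarith [norm_nonneg a])] at this
  · -- by the maximum modulus principle `g` is constant near `0`
    have hmax : IsLocalMax (norm ∘ g) 0 :=
      mem_of_superset h0 fun z hz => by simpa [← ha] using hle z hz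
    have hconst := eventually_eq_of_isLocalMax_norm (hd.eventually_differentiableAt h0) hmax
    rw [(show g =ᶠ[𝓝 0] fun _ => a from hconst).deriv_eq, deriv_const, norm_zero,
      show ‖a‖ = 1 from ha]
    norm_num

theorem norm_iteratedDeriv_two_le_of_mapsTo {w : ℂ → ℂ} (hd : DifferentiableOn ℂ w (ball 0 1))
    (hw0 : w 0 = 0) (hw : MapsTo w (ball 0 1) (closedBall 0 1)) :
    ‖iteratedDeriv 2 w 0‖ ≤ 2 * (1 - ‖deriv w 0‖ ^ 2) := by
  have h0 : ball (0 : ℂ) 1 ∈ 𝓝 0 := ball_mem_nhds 0 one_pos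
  set g := dslope w 0
  have hgd : DifferentiableOn ℂ g (ball 0 1) := (differentiableOn_dslope h0).mpr hd
  have hg : MapsTo g (ball 0 1) (closedBall 0 1) := fun z hz => by
    simpa using norm_dslope_le_div_of_mapsTo_ball hd (by rwa [hw0]) hz
  have hwg : w = fun z => z * g z := funext fun z => by
    simpa [hw0] using (sub_smul_dslope w 0 z).symm
  have hw2 : iteratedDeriv 2 w 0 = 2 * deriv g 0 := by
    rw [hwg, iteratedDeriv_succ_id_mul_zero (hgd.analyticAt h0).contDiffAt, iteratedDeriv_one]
    norm_num
  have hpick := norm_deriv_le_one_sub_sq_of_mapsTo hgd hg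
  rw [show g 0 = deriv w 0 from dslope_same w 0] at hpick
  rw [hw2, norm_mul, Complex.norm_two]
  gcongr

end Complex

theorem norm_mul_sq_sub_mul_le_max {K : Type*} [NormedField K] {A B c₁ c₂ : K}
    (hc : ‖c₂‖ ≤ 1 - ‖c₁‖ ^ 2) : ‖A * c₁ ^ 2 - B * c₂‖ ≤ max ‖A‖ ‖B‖ :=
  calc ‖A * c₁ ^ 2 - B * c₂‖ ≤ ‖A‖ * ‖c₁‖ ^ 2 + ‖B‖ * ‖c₂‖ := by
        rw [← norm_pow, ← norm_mul, ← norm_mul]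
        exact norm_sub_le _ _
    _ ≤ max ‖A‖ ‖B‖ * ‖c₁‖ ^ 2 + max ‖A‖ ‖B‖ * (1 - ‖c₁‖ ^ 2) := by
        have : 0 ≤ 1 - ‖c₁‖ ^ 2 := (norm_nonneg _).trans hc
        gcongr
        · exact le_max_left _ _
        · exact le_max_right _ _
    _ = max ‖A‖ ‖B‖ := by ring

namespace SK

theorem iteratedDeriv_three_inv_eq {α : ℝ} {f w finv : ℂ → ℂ} (hf : AnalyticAt ℂ f 0)
    (hw : AnalyticAt ℂ w 0) (hfinv : AnalyticAt ℂ finv 0) (hf0 : f 0 = 0) (hf1 : deriv f 0 = 1)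
    (hw0 : w 0 = 0) (hsub : (fun z => f z * qt α (w z)) =ᶠ[𝓝 0] fun z => z * deriv f z)
    (hinv : ∀ᶠ z in 𝓝 0, finv (f z) = z) :
    iteratedDeriv 3 finv 0 / 6 = (2 * α ^ 2 - 15 * α + 18) / 18 * deriv w 0 ^ 2
      - (3 - α) / 6 * (iteratedDeriv 2 w 0 / 2) := by
  have hq : AnalyticAt ℂ (qt α) (w 0) := by rw [hw0]; exact qt.analyticAt_zero α
  have hQ : AnalyticAt ℂ (qt α ∘ w) 0 := hq.comp hw
  have hQ0 : (qt α ∘ w) 0 = 1 := by simp [hw0, qt.apply_zero]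
  obtain ⟨hq1, hq2⟩ := qt.deriv_zero_and_iteratedDeriv_two_zero α
  have hQ1 : deriv (qt α ∘ w) 0 = (3 - α) / 3 * deriv w 0 := by
    rw [deriv_comp _ hq.differentiableAt hw.differentiableAt, hw0, hq1]
  have hQ2 : iteratedDeriv 2 (qt α ∘ w) 0 =
      (2 * (α - 3) ^ 2 + 6 * α) / 9 * deriv w 0 ^ 2 + (3 - α) / 3 * iteratedDeriv 2 w 0 := by
    rw [iteratedDeriv_comp_two hq.contDiffAt hw.contDiffAt, hw0, hq1, hq2]
  have hf2 := iteratedDeriv_two_of_mul_eq_id_mul_deriv hf hQ hf0 hf1 hQ0 hsub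
  have hf3 := iteratedDeriv_three_of_mul_eq_id_mul_deriv hf hQ hf0 hf1 hQ0 hsub
  have hinv3 := iteratedDeriv_three_of_leftInverse (hf0 ▸ hfinv).contDiffAt hf.contDiffAt hinv hf1
  rw [hQ1] at hf2 hf3
  rw [hQ2] at hf3
  rw [hf0] at hinv3
  rw [hinv3]
  linear_combination (-1 / 12 : ℂ) * hf3 +
    (iteratedDeriv 2 f 0 / 2 + (3 - α) / 4 * deriv w 0) * hf2

theorem max_norm_coeff_le {α : ℝ} (hα : α ≤ 1) :
    max ‖((2 * (α : ℂ) ^ 2 - 15 * α + 18) / 18)‖ ‖((3 - (α : ℂ)) / 6)‖ ≤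
      (3 - α) / 6 * max 1 ‖((5 * (α : ℂ) ^ 2 - 33 * (α : ℂ) + 45) / (6 * (3 - (α : ℂ))))‖ := by
  have hS : 0 < (3 - α) / 6 := by linarith
  have hT : 0 ≤ (2 * α ^ 2 - 15 * α + 18) / 18 := by nlinarith
  have hTS : (2 * α ^ 2 - 15 * α + 18) / 18 ≤
      (3 - α) / 6 * ((5 * α ^ 2 - 33 * α + 45) / (6 * (3 - α))) := by
    rw [div_mul_div_comm, div_le_div_iff₀ (by norm_num) (by nlinarith)]
    nlinarith [sq_nonneg (α - 3 / 2), sq_nonneg α]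
  push_cast [← Complex.ofReal_ofNat, ← Complex.ofReal_pow, ← Complex.ofReal_mul,
    ← Complex.ofReal_sub, ← Complex.ofReal_add, ← Complex.ofReal_div]
  simp only [Complex.norm_real, Real.norm_eq_abs, abs_of_nonneg hT, abs_of_pos hS]
  refine max_le (hTS.trans ?_) ?_
  · gcongr
    exact (le_abs_self _).trans (le_max_right _ _)
  · exact le_mul_of_one_le_right hS.le (le_max_left _ _)

end SK

theorem stmt18_general (α : ℝ) (hα2 : α ≤ 1) (f w finv : ℂ → ℂ) (b : ℕ → ℂ)
    (ε : ℝ) (hε : 0 < ε)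
    (hf : DifferentiableOn ℂ f (Metric.ball 0 1)) (hf0 : f 0 = 0) (hf1 : deriv f 0 = 1)
    (hfne : ∀ z : ℂ, ‖z‖ < 1 → z ≠ 0 → f z ≠ 0)
    (hw : DifferentiableOn ℂ w (Metric.ball 0 1)) (hw0 : w 0 = 0)
    (hwb : ∀ z : ℂ, ‖z‖ < 1 → ‖w z‖ < 1)
    (hsub : ∀ z : ℂ, ‖z‖ < 1 → z ≠ 0 → z * deriv f z / f z = qt α (w z))
    (hbsum : ∀ u : ℂ, ‖u‖ < ε → HasSum (fun n : ℕ => b (n + 1) * u ^ (n + 1)) (finv u))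
    (hinv : ∀ z : ℂ, ‖z‖ < ε → finv (f z) = z) :
    ‖b 3‖ ≤ (3 - α) / 6 *
      max 1 ‖((5 * (α : ℂ) ^ 2 - 33 * (α : ℂ) + 45) / (6 * (3 - (α : ℂ))))‖ := by
  have h0 : ball (0 : ℂ) 1 ∈ 𝓝 0 := ball_mem_nhds 0 one_pos
  have hfinv : HasFPowerSeriesOnBall finv (ofScalars ℂ (Function.update b 0 0)) 0
      (ENNReal.ofReal ε) :=
    hasFPowerSeriesOnBall_ofScalars_of_hasSum hε fun u hu => by
      rw [← hasSum_nat_add_iff' 1]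
      simpa using hbsum u hu
  have hsub' : (fun z => f z * qt α (w z)) =ᶠ[𝓝 0] fun z => z * deriv f z := by
    filter_upwards [h0] with z hz
    rw [mem_ball_zero_iff] at hz
    rcases eq_or_ne z 0 with rfl | hz0
    · simp [hf0]
    · rw [← hsub z hz hz0, mul_div_cancel₀ _ (hfne z hz hz0)]
  have hinv' : ∀ᶠ z in 𝓝 0, finv (f z) = z :=
    eventually_of_mem (ball_mem_nhds 0 hε) fun z hz => hinv z (mem_ball_zero_iff.mp hz)
  have hb3 : b 3 = iteratedDeriv 3 finv 0 / 6 := by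
    rw [hfinv.iteratedDeriv_eq_factorial_mul]
    simp [Nat.factorial]
  have hschwarz := Complex.norm_iteratedDeriv_two_le_of_mapsTo hw hw0 fun z hz =>
    mem_closedBall_zero_iff.mpr (hwb z (mem_ball_zero_iff.mp hz)).le
  rw [hb3, SK.iteratedDeriv_three_inv_eq (hf.analyticAt h0) (hw.analyticAt h0)
    hfinv.analyticAt hf0 hf1 hw0 hsub' hinv']
  refine (norm_mul_sq_sub_mul_le_max ?_).trans (SK.max_norm_coeff_le hα2)
  rw [norm_div, Complex.norm_two]
  linarith

/-- If f ∈ SK(α) has inverse f⁻¹(u) = u + ∑_{n≥2} b_n u^n near 0, then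
    |b₃| ≤ ((3-α)/6) max{1, |(5α² - 33α + 45)/(6(3-α))|}. -/
theorem stmt18 (α : ℝ) (hα1 : -3 < α) (hα2 : α ≤ 1) (f w finv : ℂ → ℂ) (b : ℕ → ℂ)
    (ε : ℝ) (hε : 0 < ε)
    (hf : DifferentiableOn ℂ f (Metric.ball 0 1)) (hf0 : f 0 = 0) (hf1 : deriv f 0 = 1)
    (hfne : ∀ z : ℂ, ‖z‖ < 1 → z ≠ 0 → f z ≠ 0)
    (hw : DifferentiableOn ℂ w (Metric.ball 0 1)) (hw0 : w 0 = 0)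
    (hwb : ∀ z : ℂ, ‖z‖ < 1 → ‖w z‖ < 1)
    (hsub : ∀ z : ℂ, ‖z‖ < 1 → z ≠ 0 → z * deriv f z / f z = qt α (w z))
    (hb1 : b 1 = 1)
    (hbsum : ∀ u : ℂ, ‖u‖ < ε → HasSum (fun n : ℕ => b (n + 1) * u ^ (n + 1)) (finv u))
    (hinv : ∀ z : ℂ, ‖z‖ < ε → finv (f z) = z) :
    ‖b 3‖ ≤ (3 - α) / 6 *
      max 1 ‖((5 * (α : ℂ) ^ 2 - 33 * (α : ℂ) + 45) / (6 * (3 - (α : ℂ))))‖ :=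
  stmt18_general α hα2 f w finv b ε hε hf hf0 hf1 hfne hw hw0 hwb hsub hbsum hinv
end
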